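/- For every player n, every nominal input sequence ū, and every direction δu: J_n(ū) + DJ_n(ū)[δu] + ½ D²J_n(ū)[δu, δu] = ½ Σ_{k=0}^T ( [1, δx_kᵀ, δu_kᵀ] M_{n,k} [1; δx_k; δu_k] + M_{n,k}^{1x} Δx_k ). That is, the second-order Taylor model of J_n at ū coincides with the stage-wise quadratic objective of the dynamic game whose states are (δx_k, Δx_k). -/

import Mathlib

open Matrix BigOperators Filter

noncomputable section

namespace DynGame

/-- joint input coordinate index: player `n`, coordinate `i < m n` -/
abbrev UIdx (N : ℕ) (m : Fin N → ℕ) := (n : Fin N) × Fin (m n)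
/-- state vector -/
abbrev Stt (nx : ℕ) := Fin nx → ℝ
/-- joint input vector -/
abbrev Inp (N : ℕ) (m : Fin N → ℕ) := UIdx N m → ℝ
/-- input sequence over times 0,…,T -/
abbrev Seq (T N : ℕ) (m : Fin N → ℕ) := Fin (T+1) → Inp N m
/-- joint (state, input) index, of size nx + nu -/
abbrev ZIdx (nx N : ℕ) (m : Fin N → ℕ) := Fin nx ⊕ UIdx N m
/-- extended index of size 1 + nx + nu -/
abbrev Ix (nx N : ℕ) (m : Fin N → ℕ) := Unit ⊕ ZIdx nx N m
/-- extended state index of size 1 + nx -/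
abbrev Jx (nx : ℕ) := Unit ⊕ Fin nx

/-- problem data: dynamics, stage costs, initial state -/
structure Setup (T nx N : ℕ) (m : Fin N → ℕ) where
  f : ℕ → Stt nx → Inp N m → Stt nx
  c : Fin N → ℕ → Stt nx → Inp N m → ℝ
  x0 : Stt nx

variable {T nx N : ℕ} {m : Fin N → ℕ}

/-- extend an input sequence to all of ℕ (by zero beyond T) -/
def extSeq (u : Seq T N m) : ℕ → Inp N m := fun k => if h : k < T + 1 then u ⟨k, h⟩ else 0

/-- trajectory generated by input sequence `u` -/
def traj (P : Setup T nx N m) (u : Seq T N m) : ℕ → Stt nx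
  | 0 => P.x0
  | k + 1 => P.f k (traj P u k) (extSeq u k)

/-- player `n`'s total cost -/
def J (P : Setup T nx N m) (n : Fin N) (u : Seq T N m) : ℝ :=
  ∑ k ∈ Finset.range (T + 1), P.c n k (traj P u k) (extSeq u k)

/-- stacked vector of the partial gradients ∂Jₙ/∂u_{n,:} -/
def calJ (P : Setup T nx N m) (u : Seq T N m) : Seq T N m :=
  fun k p => fderiv ℝ (J P p.1) u (Pi.single k (Pi.single p 1))

/-- dynamics as a function of the joint (state,input) pair -/
def fpair (P : Setup T nx N m) (k : ℕ) : Stt nx × Inp N m → Stt nx := fun z => P.f k z.1 z.2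

/-- cost as a function of the joint (state,input) pair -/
def cpair (P : Setup T nx N m) (n : Fin N) (k : ℕ) : Stt nx × Inp N m → ℝ := fun z => P.c n k z.1 z.2

/-- nominal (state,input) pair at time k -/
def zbar (P : Setup T nx N m) (ub : Seq T N m) (k : ℕ) : Stt nx × Inp N m :=
  (traj P ub k, extSeq ub k)

/-- coordinate basis vector of the joint (state,input) space -/
def zbasis (w : ZIdx nx N m) : Stt nx × Inp N m :=
  Sum.elim (fun i => (Pi.single i 1, 0)) (fun p => ((0 : Stt nx), Pi.single p 1)) w

/-- A_k = ∂f_k/∂x(x̄_k, ū_k) -/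
def Amat (P : Setup T nx N m) (ub : Seq T N m) (k : ℕ) : Matrix (Fin nx) (Fin nx) ℝ :=
  fun i j => fderiv ℝ (fun x => P.f k x (extSeq ub k) i) (traj P ub k) (Pi.single j 1)

/-- B_k = ∂f_k/∂u(x̄_k, ū_k) -/
def Bmat (P : Setup T nx N m) (ub : Seq T N m) (k : ℕ) : Matrix (Fin nx) (UIdx N m) ℝ :=
  fun i p => fderiv ℝ (fun v => P.f k (traj P ub k) v i) (extSeq ub k) (Pi.single p 1)

/-- G_k^l : Hessian of the l-th component of f_k w.r.t. the joint variable (x,u) -/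
def Gmat (P : Setup T nx N m) (ub : Seq T N m) (k : ℕ) (l : Fin nx) :
    Matrix (ZIdx nx N m) (ZIdx nx N m) ℝ :=
  fun a b =>
    fderiv ℝ (fun z => fderiv ℝ (fun w => fpair P k w l) z (zbasis a)) (zbar P ub k) (zbasis b)

/-- M_{n,k}^{1x} = ∂c_{n,k}/∂x (row vector) -/
def M1x (P : Setup T nx N m) (ub : Seq T N m) (n : Fin N) (k : ℕ) : Fin nx → ℝ :=
  fun j => fderiv ℝ (cpair P n k) (zbar P ub k) (zbasis (Sum.inl j))

/-- M_{n,k}^{1u} = ∂c_{n,k}/∂u (row vector) -/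
def M1u (P : Setup T nx N m) (ub : Seq T N m) (n : Fin N) (k : ℕ) : UIdx N m → ℝ :=
  fun p => fderiv ℝ (cpair P n k) (zbar P ub k) (zbasis (Sum.inr p))

/-- Hessian blocks of c_{n,k} w.r.t. the joint variable (x,u) -/
def M2 (P : Setup T nx N m) (ub : Seq T N m) (n : Fin N) (k : ℕ) :
    Matrix (ZIdx nx N m) (ZIdx nx N m) ℝ :=
  fun w w' =>
    fderiv ℝ (fun z => fderiv ℝ (cpair P n k) z (zbasis w)) (zbar P ub k) (zbasis w')

/-- the matrix M_{n,k} of the paper -/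
def Mmat (P : Setup T nx N m) (ub : Seq T N m) (n : Fin N) (k : ℕ) :
    Matrix (Ix nx N m) (Ix nx N m) ℝ :=
  fun a b =>
    match a, b with
    | Sum.inl _, Sum.inl _ => 2 * P.c n k (traj P ub k) (extSeq ub k)
    | Sum.inl _, Sum.inr w => Sum.elim (M1x P ub n k) (M1u P ub n k) w
    | Sum.inr w, Sum.inl _ => Sum.elim (M1x P ub n k) (M1u P ub n k) w
    | Sum.inr w, Sum.inr w' => M2 P ub n k w w'

/-- vector [1; δx; δu] -/
def vec1 (δx : Stt nx) (δu : Inp N m) : Ix nx N m → ℝ :=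
  Sum.elim (fun _ => (1 : ℝ)) (Sum.elim δx δu)

/-- vector [1; δx] -/
def vecj (δx : Stt nx) : Jx nx → ℝ := Sum.elim (fun _ => (1 : ℝ)) δx

/-- the matrix F formed by stacking the rows Γ_n^{uₙ u} -/
def Fof (Γ : Fin N → Matrix (Ix nx N m) (Ix nx N m) ℝ) : Matrix (UIdx N m) (UIdx N m) ℝ :=
  fun p q => Γ p.1 (Sum.inr (Sum.inr p)) (Sum.inr (Sum.inr q))

/-- the matrix P formed by stacking the blocks Γ_n^{uₙ x} -/
def Pof (Γ : Fin N → Matrix (Ix nx N m) (Ix nx N m) ℝ) : Matrix (UIdx N m) (Fin nx) ℝ :=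
  fun p j => Γ p.1 (Sum.inr (Sum.inr p)) (Sum.inr (Sum.inl j))

/-- the vector H formed by stacking the blocks Γ_n^{uₙ 1} -/
def Hof (Γ : Fin N → Matrix (Ix nx N m) (Ix nx N m) ℝ) : Inp N m :=
  fun p => Γ p.1 (Sum.inr (Sum.inr p)) (Sum.inl ())

/-- s = −F⁻¹ H -/
def sof (Γ : Fin N → Matrix (Ix nx N m) (Ix nx N m) ℝ) : Inp N m :=
  -((Fof Γ)⁻¹ *ᵥ Hof Γ)

/-- K = −F⁻¹ P -/
def Kof (Γ : Fin N → Matrix (Ix nx N m) (Ix nx N m) ℝ) : Matrix (UIdx N m) (Fin nx) ℝ :=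
  -((Fof Γ)⁻¹ * Pof Γ)

/-- the matrix [[1,0,0],[0,A,B]] -/
def Cmat (A : Matrix (Fin nx) (Fin nx) ℝ) (B : Matrix (Fin nx) (UIdx N m) ℝ) :
    Matrix (Jx nx) (Ix nx N m) ℝ :=
  fun a b =>
    match a, b with
    | Sum.inl _, Sum.inl _ => 1
    | Sum.inl _, Sum.inr _ => 0
    | Sum.inr _, Sum.inl _ => 0
    | Sum.inr i, Sum.inr (Sum.inl j) => A i j
    | Sum.inr i, Sum.inr (Sum.inr p) => B i p

/-- extend an (x,u)-square matrix by zeros to the 1+(x,u) index set -/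
def Dext (D : Matrix (ZIdx nx N m) (ZIdx nx N m) ℝ) : Matrix (Ix nx N m) (Ix nx N m) ℝ :=
  fun a b =>
    match a, b with
    | Sum.inr w, Sum.inr w' => D w w'
    | _, _ => 0

/-- the matrix [[1,0],[0,I],[s,K]] -/
def Emat (s : Inp N m) (K : Matrix (UIdx N m) (Fin nx) ℝ) : Matrix (Ix nx N m) (Jx nx) ℝ :=
  fun a b =>
    match a, b with
    | Sum.inl _, Sum.inl _ => 1
    | Sum.inl _, Sum.inr _ => 0
    | Sum.inr (Sum.inl _), Sum.inl _ => 0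
    | Sum.inr (Sum.inl i), Sum.inr j => if i = j then 1 else 0
    | Sum.inr (Sum.inr p), Sum.inl _ => s p
    | Sum.inr (Sum.inr p), Sum.inr j => K p j

/-- Γ_n = M_n + Cᵀ S_n C + Dext(D_n), the common backpropagation step of both recursions -/
def gammaFam (P : Setup T nx N m) (ub : Seq T N m)
    (S : Fin N → Matrix (Jx nx) (Jx nx) ℝ) (k : ℕ)
    (D : Fin N → Matrix (ZIdx nx N m) (ZIdx nx N m) ℝ) :
    Fin N → Matrix (Ix nx N m) (Ix nx N m) ℝ :=
  fun n =>
    Mmat P ub n k + (Cmat (Amat P ub k) (Bmat P ub k))ᵀ * S n * Cmat (Amat P ub k) (Bmat P ub k)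
      + Dext (D n)

/-- S_n = Eᵀ Γ_n E : substitution of the equilibrium affine policy -/
def subPolicy (Γ : Fin N → Matrix (Ix nx N m) (Ix nx N m) ℝ) :
    Fin N → Matrix (Jx nx) (Jx nx) ℝ :=
  fun n => (Emat (sof Γ) (Kof Γ))ᵀ * Γ n * Emat (sof Γ) (Kof Γ)

/-- Ω recursion, indexed by number of steps from the end: `omegaAux j = Ω_{·,T+1-j}` -/
def omegaAux (P : Setup T nx N m) (ub : Seq T N m) (n : Fin N) : ℕ → (Fin nx → ℝ)
  | 0 => 0
  | j + 1 => M1x P ub n (T - j) + omegaAux P ub n j ᵥ* Amat P ub (T - j)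

/-- Ω_{n,k} of the Newton backward recursion -/
def Omega (P : Setup T nx N m) (ub : Seq T N m) (n : Fin N) (k : ℕ) : Fin nx → ℝ :=
  omegaAux P ub n (T + 1 - k)

/-- Newton backward recursion for S, indexed by steps from the end: `newtSAux j = S_{·,T+1-j}` -/
def newtSAux (P : Setup T nx N m) (ub : Seq T N m) : ℕ → Fin N → Matrix (Jx nx) (Jx nx) ℝ
  | 0 => fun _ => 0
  | j + 1 =>
    subPolicy (gammaFam P ub (newtSAux P ub j) (T - j)
      (fun n => ∑ l, omegaAux P ub n j l • Gmat P ub (T - j) l))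

/-- D_{n,k} of the Newton backward recursion -/
def newtD (P : Setup T nx N m) (ub : Seq T N m) (k : ℕ) :
    Fin N → Matrix (ZIdx nx N m) (ZIdx nx N m) ℝ :=
  fun n => ∑ l, Omega P ub n (k + 1) l • Gmat P ub k l

/-- Γ_{n,k} of the Newton backward recursion -/
def newtGamma (P : Setup T nx N m) (ub : Seq T N m) (k : ℕ) :
    Fin N → Matrix (Ix nx N m) (Ix nx N m) ℝ :=
  gammaFam P ub (newtSAux P ub (T - k)) k (newtD P ub k)

/-- S_{n,k} of the Newton backward recursion -/
def newtSmat (P : Setup T nx N m) (ub : Seq T N m) (k : ℕ) :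
    Fin N → Matrix (Jx nx) (Jx nx) ℝ :=
  newtSAux P ub (T + 1 - k)

def newtF (P : Setup T nx N m) (ub : Seq T N m) (k : ℕ) : Matrix (UIdx N m) (UIdx N m) ℝ :=
  Fof (newtGamma P ub k)
def newtP (P : Setup T nx N m) (ub : Seq T N m) (k : ℕ) : Matrix (UIdx N m) (Fin nx) ℝ :=
  Pof (newtGamma P ub k)
def newtH (P : Setup T nx N m) (ub : Seq T N m) (k : ℕ) : Inp N m :=
  Hof (newtGamma P ub k)
def newts (P : Setup T nx N m) (ub : Seq T N m) (k : ℕ) : Inp N m :=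
  sof (newtGamma P ub k)
def newtK (P : Setup T nx N m) (ub : Seq T N m) (k : ℕ) : Matrix (UIdx N m) (Fin nx) ℝ :=
  Kof (newtGamma P ub k)

/-- DDP backward recursion for S̃, indexed by steps from the end: `ddpSAux j = S̃_{·,T+1-j}` -/
def ddpSAux (P : Setup T nx N m) (ub : Seq T N m) : ℕ → Fin N → Matrix (Jx nx) (Jx nx) ℝ
  | 0 => fun _ => 0
  | j + 1 =>
    subPolicy (gammaFam P ub (ddpSAux P ub j) (T - j)
      (fun n => ∑ l, (ddpSAux P ub j n) (Sum.inl ()) (Sum.inr l) • Gmat P ub (T - j) l))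

/-- D̃_{n,k} of the DDP backward recursion -/
def ddpD (P : Setup T nx N m) (ub : Seq T N m) (k : ℕ) :
    Fin N → Matrix (ZIdx nx N m) (ZIdx nx N m) ℝ :=
  fun n => ∑ l, (ddpSAux P ub (T - k) n) (Sum.inl ()) (Sum.inr l) • Gmat P ub k l

/-- Γ̃_{n,k} of the DDP backward recursion -/
def ddpGamma (P : Setup T nx N m) (ub : Seq T N m) (k : ℕ) :
    Fin N → Matrix (Ix nx N m) (Ix nx N m) ℝ :=
  gammaFam P ub (ddpSAux P ub (T - k)) k (ddpD P ub k)

/-- S̃_{n,k} of the DDP backward recursion -/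
def ddpSmat (P : Setup T nx N m) (ub : Seq T N m) (k : ℕ) :
    Fin N → Matrix (Jx nx) (Jx nx) ℝ :=
  ddpSAux P ub (T + 1 - k)

def ddpF (P : Setup T nx N m) (ub : Seq T N m) (k : ℕ) : Matrix (UIdx N m) (UIdx N m) ℝ :=
  Fof (ddpGamma P ub k)
def ddpPmat (P : Setup T nx N m) (ub : Seq T N m) (k : ℕ) : Matrix (UIdx N m) (Fin nx) ℝ :=
  Pof (ddpGamma P ub k)
def ddpH (P : Setup T nx N m) (ub : Seq T N m) (k : ℕ) : Inp N m :=
  Hof (ddpGamma P ub k)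
def ddps (P : Setup T nx N m) (ub : Seq T N m) (k : ℕ) : Inp N m :=
  sof (ddpGamma P ub k)
def ddpK (P : Setup T nx N m) (ub : Seq T N m) (k : ℕ) : Matrix (UIdx N m) (Fin nx) ℝ :=
  Kof (ddpGamma P ub k)

/-- Newton forward pass: states δx_k -/
def newtDx (P : Setup T nx N m) (ub : Seq T N m) : ℕ → Stt nx
  | 0 => 0
  | k + 1 =>
    Amat P ub k *ᵥ newtDx P ub k
      + Bmat P ub k *ᵥ (newtK P ub k *ᵥ newtDx P ub k + newts P ub k)

/-- Newton forward pass: inputs δu_k = K_k δx_k + s_k -/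
def newtDu (P : Setup T nx N m) (ub : Seq T N m) (k : ℕ) : Inp N m :=
  newtK P ub k *ᵥ newtDx P ub k + newts P ub k

/-- DDP forward pass: states x_k^D -/
def ddpX (P : Setup T nx N m) (ub : Seq T N m) : ℕ → Stt nx
  | 0 => P.x0
  | k + 1 =>
    P.f k (ddpX P ub k)
      (extSeq ub k + (ddpK P ub k *ᵥ (ddpX P ub k - traj P ub k) + ddps P ub k))

/-- DDP forward pass: δx_k^D = x_k^D − x̄_k -/
def ddpDx (P : Setup T nx N m) (ub : Seq T N m) (k : ℕ) : Stt nx :=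
  ddpX P ub k - traj P ub k

/-- DDP forward pass: δu_k^D = K̃_k δx_k^D + s̃_k -/
def ddpDu (P : Setup T nx N m) (ub : Seq T N m) (k : ℕ) : Inp N m :=
  ddpK P ub k *ᵥ ddpDx P ub k + ddps P ub k

/-- one full DDP iteration on input sequences -/
def ddpStep (P : Setup T nx N m) (ub : Seq T N m) : Seq T N m :=
  fun t => ub t + ddpDu P ub (t : ℕ)

/-- first-order sensitivity of the state x_k w.r.t. the input sequence, along δu -/
def dx1 (P : Setup T nx N m) (ub δu : Seq T N m) (k : ℕ) : Stt nx :=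
  fun i => fderiv ℝ (fun u => traj P u k i) ub δu

/-- second-order sensitivity of the state x_k w.r.t. the input sequence, along (δu,δu) -/
def dx2 (P : Setup T nx N m) (ub δu : Seq T N m) (k : ℕ) : Stt nx :=
  fun l => fderiv ℝ (fun u => fderiv ℝ (fun u' => traj P u' k l) u δu) ub δu

/-- recursively defined first-order state perturbation δx_k -/
def dxRec (P : Setup T nx N m) (ub δu : Seq T N m) : ℕ → Stt nx
  | 0 => 0
  | k + 1 => Amat P ub k *ᵥ dxRec P ub δu k + Bmat P ub k *ᵥ extSeq δu k

/-- the quadratic vector R_k(δx, δu), with l-th entry [δx;δu]ᵀ G_k^l [δx;δu] -/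
def Rquad (P : Setup T nx N m) (ub : Seq T N m) (k : ℕ) (δx : Stt nx) (δu : Inp N m) :
    Stt nx :=
  fun l => Sum.elim δx δu ⬝ᵥ (Gmat P ub k l *ᵥ Sum.elim δx δu)

/-- recursively defined second-order state perturbation Δx_k -/
def DxRec (P : Setup T nx N m) (ub δu : Seq T N m) : ℕ → Stt nx
  | 0 => 0
  | k + 1 =>
    Amat P ub k *ᵥ DxRec P ub δu k + Rquad P ub k (dxRec P ub δu k) (extSeq δu k)

/-- partial Jacobian ∂x_k/∂u_i at ū -/
def Xjac (P : Setup T nx N m) (ub : Seq T N m) (k : ℕ) (i : Fin (T+1)) :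
    Matrix (Fin nx) (UIdx N m) ℝ :=
  fun l a => fderiv ℝ (fun u => traj P u k l) ub (Pi.single i (Pi.single a 1))

/-- mixed second partial derivatives ∂²x_k^l/∂u_i∂u_j at ū -/
def Xhess (P : Setup T nx N m) (ub : Seq T N m) (k : ℕ) (l : Fin nx) (i j : Fin (T+1)) :
    Matrix (UIdx N m) (UIdx N m) ℝ :=
  fun a b =>
    fderiv ℝ (fun u => fderiv ℝ (fun u' => traj P u' k l) u (Pi.single i (Pi.single a 1))) ub
      (Pi.single j (Pi.single b 1))

/-- restarted trajectory: state at time k+j when restarting from ξ at time k with nominal inputs -/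
def trajFrom (P : Setup T nx N m) (ub : Seq T N m) (k : ℕ) (ξ : Stt nx) : ℕ → Stt nx
  | 0 => ξ
  | j + 1 => P.f (k + j) (trajFrom P ub k ξ j) (extSeq ub (k + j))

/-- player n's cost-to-go from time k as a function of the time-k state -/
def cost2go (P : Setup T nx N m) (ub : Seq T N m) (n : Fin N) (k : ℕ) (ξ : Stt nx) : ℝ :=
  ∑ j ∈ Finset.range (T + 1 - k), P.c n (k + j) (trajFrom P ub k ξ j) (extSeq ub (k + j))

/-- second-order Taylor polynomial of g at z0, evaluated at z -/
def taylor2 {E : Type*} [NormedAddCommGroup E] [NormedSpace ℝ E] (g : E → ℝ) (z0 z : E) : ℝ :=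
  g z0 + fderiv ℝ g z0 (z - z0)
    + (1 / 2) * fderiv ℝ (fun w => fderiv ℝ g w (z - z0)) z0 (z - z0)

/-- DDP approximate value functions, indexed by steps from the end: `ddpVAux j = Ṽ_{·,T+1-j}` -/
def ddpVAux (P : Setup T nx N m) (ub : Seq T N m) : ℕ → Fin N → Stt nx → ℝ
  | 0 => fun _ _ => 0
  | j + 1 => fun n x =>
    taylor2 (fun z : Stt nx × Inp N m => cpair P n (T - j) z + ddpVAux P ub j n (fpair P (T - j) z))
      (zbar P ub (T - j))
      (x, extSeq ub (T - j)
        + (ddpK P ub (T - j) *ᵥ (x - traj P ub (T - j)) + ddps P ub (T - j)))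

/-- DDP approximate state-action value function Q̃_{n,k} -/
def ddpQ (P : Setup T nx N m) (ub : Seq T N m) (k : ℕ) (n : Fin N)
    (x : Stt nx) (u : Inp N m) : ℝ :=
  taylor2 (fun z : Stt nx × Inp N m => cpair P n k z + ddpVAux P ub (T - k) n (fpair P k z))
    (zbar P ub k) (x, u)

/-- DDP approximate value function Ṽ_{n,k} -/
def ddpV (P : Setup T nx N m) (ub : Seq T N m) (k : ℕ) (n : Fin N) (x : Stt nx) : ℝ :=
  ddpVAux P ub (T + 1 - k) n x

/-- Newton-game value functions, indexed by steps from the end: `newtVAux j = V_{·,T+1-j}` -/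
def newtVAux (P : Setup T nx N m) (ub : Seq T N m) : ℕ → Fin N → Stt nx → Stt nx → ℝ
  | 0 => fun _ _ _ => 0
  | j + 1 => fun n δx Δx =>
    (1 / 2) * (vec1 δx (newtK P ub (T - j) *ᵥ δx + newts P ub (T - j)) ⬝ᵥ
        (Mmat P ub n (T - j) *ᵥ vec1 δx (newtK P ub (T - j) *ᵥ δx + newts P ub (T - j)))
      + M1x P ub n (T - j) ⬝ᵥ Δx)
    + newtVAux P ub j n
        (Amat P ub (T - j) *ᵥ δx
          + Bmat P ub (T - j) *ᵥ (newtK P ub (T - j) *ᵥ δx + newts P ub (T - j)))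
        (Amat P ub (T - j) *ᵥ Δx
          + Rquad P ub (T - j) δx (newtK P ub (T - j) *ᵥ δx + newts P ub (T - j)))

/-- Newton-game state-action value function Q_{n,k} -/
def newtQ (P : Setup T nx N m) (ub : Seq T N m) (k : ℕ) (n : Fin N)
    (δx Δx : Stt nx) (δu : Inp N m) : ℝ :=
  (1 / 2) * (vec1 δx δu ⬝ᵥ (Mmat P ub n k *ᵥ vec1 δx δu) + M1x P ub n k ⬝ᵥ Δx)
    + newtVAux P ub (T - k) n (Amat P ub k *ᵥ δx + Bmat P ub k *ᵥ δu)
        (Amat P ub k *ᵥ Δx + Rquad P ub k δx δu)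

/-- Newton-game value function V_{n,k} -/
def newtV (P : Setup T nx N m) (ub : Seq T N m) (k : ℕ) (n : Fin N) (δx Δx : Stt nx) : ℝ :=
  newtVAux P ub (T + 1 - k) n δx Δx

/-- replace player n's inputs in u* by w, keeping the others fixed -/
def combineInput (ustar : Seq T N m) (n : Fin N) (w : Fin (T+1) → Fin (m n) → ℝ) :
    Seq T N m :=
  fun k p => if h : p.1 = n then w k (Fin.cast (congrArg m h) p.2) else ustar k p


section Helpers

variable {T nx N : ℕ} {m : Fin N → ℕ}

lemma clm_pi_expand {ι : Type*} [Fintype ι] [DecidableEq ι] {F : Type*}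
    [NormedAddCommGroup F] [NormedSpace ℝ F] (φ : (ι → ℝ) →L[ℝ] F) (v : ι → ℝ) :
    φ v = ∑ i, v i • φ (Pi.single i 1) := by
  have hv : ∑ i, v i • (Pi.single i 1 : ι → ℝ) = v := by
    rw [show (∑ i, v i • (Pi.single i 1 : ι → ℝ)) = ∑ i, Pi.single i (v i) from
      Finset.sum_congr rfl fun i _ => by rw [← Pi.single_smul, smul_eq_mul, mul_one]]
    exact Finset.univ_sum_single v
  conv_lhs => rw [← hv]
  rw [map_sum]
  simp only [φ.map_smul]

lemma clm_z_expand {F : Type*} [NormedAddCommGroup F] [NormedSpace ℝ F]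
    (φ : (Stt nx × Inp N m) →L[ℝ] F) (v : Stt nx) (w : Inp N m) :
    φ (v, w) = ∑ a : ZIdx nx N m, Sum.elim v w a • φ (zbasis a) := by
  have h0 : (v, w) = ((v, (0 : Inp N m)) + ((0 : Stt nx), w)) := by
    simp [Prod.ext_iff]
  rw [h0, map_add, Fintype.sum_sum_type]
  congr 1
  · have := clm_pi_expand (φ.comp (ContinuousLinearMap.inl ℝ (Stt nx) (Inp N m))) v
    simpa [zbasis] using this
  · have := clm_pi_expand (φ.comp (ContinuousLinearMap.inr ℝ (Stt nx) (Inp N m))) w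
    simpa [zbasis] using this

lemma fderiv_pi_comp {E : Type*} [NormedAddCommGroup E] [NormedSpace ℝ E]
    {ι : Type*} [Fintype ι] (g : E → ι → ℝ) {x : E} (hg : DifferentiableAt ℝ g x) (l : ι) :
    fderiv ℝ (fun y => g y l) x = (ContinuousLinearMap.proj l).comp (fderiv ℝ g x) := by
  have h := ((ContinuousLinearMap.proj (R := ℝ) (φ := fun _ : ι => ℝ) l).hasFDerivAt).comp x
    hg.hasFDerivAt
  exact HasFDerivAt.fderiv (h : HasFDerivAt (fun y => g y l) _ x)

end Helpers
section S6Proof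

variable {T nx N : ℕ} {m : Fin N → ℕ} (P : Setup T nx N m)

/-- trajectory as a function of the input sequence -/
def trajF (k : ℕ) : Seq T N m → Stt nx := fun u => traj P u k

/-- the (state, input) pair as a function of the input sequence -/
def ZmapF (k : ℕ) : Seq T N m → Stt nx × Inp N m := fun u => (traj P u k, extSeq u k)

/-- evaluation at time k as a continuous linear map -/
def extCLM (k : ℕ) (h : k < T + 1) : Seq T N m →L[ℝ] Inp N m :=
  ContinuousLinearMap.proj (⟨k, h⟩ : Fin (T+1))

lemma extSeq_fun_eq (k : ℕ) (h : k < T + 1) :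
    (fun u : Seq T N m => extSeq u k) = ⇑(extCLM k h) := by
  funext u
  simp only [extSeq, dif_pos h]; rfl

lemma extCLM_apply (k : ℕ) (h : k < T + 1) (u : Seq T N m) :
    extCLM k h u = extSeq u k := by
  simp only [extSeq, dif_pos h]; rfl

variable (hf : ∀ k ≤ T, ContDiff ℝ 2 (fpair P k))

include hf in
lemma contDiff_trajF : ∀ k, k ≤ T + 1 → ContDiff ℝ 2 (trajF P k) := by
  intro k
  induction k with
  | zero => intro _; exact contDiff_const
  | succ k ih =>
    intro h
    have hk : k ≤ T := by omega
    have hlt : k < T + 1 := by omega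
    have he : ContDiff ℝ 2 (fun u : Seq T N m => extSeq u k) := by
      rw [extSeq_fun_eq k hlt]
      exact (extCLM k hlt).contDiff
    exact (hf k hk).comp ((ih (by omega)).prodMk he)

include hf in
lemma contDiff_ZmapF (k : ℕ) (hk : k ≤ T) : ContDiff ℝ 2 (ZmapF P k) := by
  have hlt : k < T + 1 := by omega
  have he : ContDiff ℝ 2 (fun u : Seq T N m => extSeq u k) := by
    rw [extSeq_fun_eq k hlt]
    exact (extCLM k hlt).contDiff
  exact (contDiff_trajF P hf k (by omega)).prodMk he

include hf in
lemma hasFDerivAt_Z (k : ℕ) (hk : k ≤ T) (u : Seq T N m) :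
    HasFDerivAt (ZmapF P k)
      ((fderiv ℝ (trajF P k) u).prod (extCLM k (by omega))) u := by
  have h1 : HasFDerivAt (trajF P k) (fderiv ℝ (trajF P k) u) u :=
    (((contDiff_trajF P hf k (by omega)).differentiable two_ne_zero) u).hasFDerivAt
  have hlt : k < T + 1 := by omega
  have h2 : HasFDerivAt (fun u : Seq T N m => extSeq u k) (extCLM k hlt) u := by
    rw [extSeq_fun_eq k hlt]
    exact (extCLM k hlt).hasFDerivAt
  exact h1.prodMk h2

include hf in
lemma hasFDerivAt_comp_Z {F : Type*} [NormedAddCommGroup F] [NormedSpace ℝ F]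
    (φ : Stt nx × Inp N m → F) (hφ : Differentiable ℝ φ) (k : ℕ) (hk : k ≤ T) (u : Seq T N m) :
    HasFDerivAt (fun u => φ (ZmapF P k u))
      ((fderiv ℝ φ (ZmapF P k u)).comp
        ((fderiv ℝ (trajF P k) u).prod (extCLM k (by omega)))) u :=
  ((hφ (ZmapF P k u)).hasFDerivAt).comp u (hasFDerivAt_Z P hf k hk u)

include hf in
lemma fderiv_comp_Z {F : Type*} [NormedAddCommGroup F] [NormedSpace ℝ F]
    (φ : Stt nx × Inp N m → F) (hφ : Differentiable ℝ φ) (k : ℕ) (hk : k ≤ T)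
    (u δu : Seq T N m) :
    fderiv ℝ (fun u => φ (ZmapF P k u)) u δu
      = fderiv ℝ φ (ZmapF P k u) (fderiv ℝ (trajF P k) u δu, extSeq δu k) := by
  rw [(hasFDerivAt_comp_Z P hf φ hφ k hk u).fderiv]
  simp [ContinuousLinearMap.comp_apply, extCLM_apply]

end S6Proof
section S6Proof2

variable {T nx N : ℕ} {m : Fin N → ℕ} (P : Setup T nx N m)

lemma hasFDerivAt_fderiv_apply {E F : Type*} [NormedAddCommGroup E] [NormedSpace ℝ E]
    [NormedAddCommGroup F] [NormedSpace ℝ F]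
    (ψ : E → F) (hψ : ContDiff ℝ 2 ψ) (z0 : E) (ζ : E) :
    HasFDerivAt (fun z => fderiv ℝ ψ z ζ) ((fderiv ℝ (fderiv ℝ ψ) z0).flip ζ) z0 := by
  have hH : HasFDerivAt (fderiv ℝ ψ) (fderiv ℝ (fderiv ℝ ψ) z0) z0 :=
    (((hψ.fderiv_right (m := 1) (by norm_num)).differentiable one_ne_zero) z0).hasFDerivAt
  have h := hH.clm_apply (hasFDerivAt_const ζ z0)
  simpa using h

variable (ub : Seq T N m) {k : ℕ}

lemma Amat_eq (hf2 : ContDiff ℝ 2 (fpair P k)) (i : Fin nx) (j : Fin nx) :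
    Amat P ub k i j = fderiv ℝ (fpair P k) (zbar P ub k) (zbasis (Sum.inl j)) i := by
  have h0 : HasFDerivAt (fun x : Stt nx => (x, extSeq ub k))
      ((ContinuousLinearMap.id ℝ (Stt nx)).prod 0) (traj P ub k) :=
    HasFDerivAt.prodMk (hasFDerivAt_id _) (hasFDerivAt_const _ _)
  have h1 : HasFDerivAt (fpair P k) (fderiv ℝ (fpair P k) (zbar P ub k)) (zbar P ub k) :=
    ((hf2.differentiable two_ne_zero) _).hasFDerivAt
  have h2 := h1.comp (traj P ub k) h0
  have h3 := ((ContinuousLinearMap.proj (R := ℝ) (φ := fun _ : Fin nx => ℝ) i).hasFDerivAt).comp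
    (traj P ub k) h2
  have h4 : HasFDerivAt (fun x : Stt nx => P.f k x (extSeq ub k) i)
      ((ContinuousLinearMap.proj i).comp
        ((fderiv ℝ (fpair P k) (zbar P ub k)).comp
          ((ContinuousLinearMap.id ℝ (Stt nx)).prod 0))) (traj P ub k) := h3
  show fderiv ℝ (fun x => P.f k x (extSeq ub k) i) (traj P ub k) (Pi.single j 1) = _
  rw [h4.fderiv]
  simp [zbasis]

lemma Bmat_eq (hf2 : ContDiff ℝ 2 (fpair P k)) (i : Fin nx) (p : UIdx N m) :
    Bmat P ub k i p = fderiv ℝ (fpair P k) (zbar P ub k) (zbasis (Sum.inr p)) i := by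
  have h0 : HasFDerivAt (fun v : Inp N m => (traj P ub k, v))
      ((0 : Inp N m →L[ℝ] Stt nx).prod (ContinuousLinearMap.id ℝ (Inp N m))) (extSeq ub k) :=
    HasFDerivAt.prodMk (hasFDerivAt_const _ _) (hasFDerivAt_id _)
  have h1 : HasFDerivAt (fpair P k) (fderiv ℝ (fpair P k) (zbar P ub k)) (zbar P ub k) :=
    ((hf2.differentiable two_ne_zero) _).hasFDerivAt
  have h2 := h1.comp (extSeq ub k) h0
  have h3 := ((ContinuousLinearMap.proj (R := ℝ) (φ := fun _ : Fin nx => ℝ) i).hasFDerivAt).comp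
    (extSeq ub k) h2
  have h4 : HasFDerivAt (fun v : Inp N m => P.f k (traj P ub k) v i)
      ((ContinuousLinearMap.proj i).comp
        ((fderiv ℝ (fpair P k) (zbar P ub k)).comp
          ((0 : Inp N m →L[ℝ] Stt nx).prod (ContinuousLinearMap.id ℝ (Inp N m))))) (extSeq ub k)
    := h3
  show fderiv ℝ (fun v => P.f k (traj P ub k) v i) (extSeq ub k) (Pi.single p 1) = _
  rw [h4.fderiv]
  simp [zbasis]

lemma fpair_apply_vec (hf2 : ContDiff ℝ 2 (fpair P k)) (v : Stt nx) (w : Inp N m) (l : Fin nx) :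
    fderiv ℝ (fpair P k) (zbar P ub k) (v, w) l
      = (Amat P ub k *ᵥ v + Bmat P ub k *ᵥ w) l := by
  rw [clm_z_expand (fderiv ℝ (fpair P k) (zbar P ub k)) v w]
  rw [Finset.sum_apply, Fintype.sum_sum_type]
  simp only [Pi.smul_apply, smul_eq_mul, Sum.elim_inl, Sum.elim_inr,
    Pi.add_apply, Matrix.mulVec, dotProduct]
  congr 1
  · exact Finset.sum_congr rfl fun j _ => by rw [Amat_eq P ub hf2 l j]; ring
  · exact Finset.sum_congr rfl fun p _ => by rw [Bmat_eq P ub hf2 l p]; ring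

lemma Gmat_eq (hf2 : ContDiff ℝ 2 (fpair P k)) (l : Fin nx) (a b : ZIdx nx N m) :
    Gmat P ub k l a b
      = (fderiv ℝ (fderiv ℝ (fpair P k)) (zbar P ub k) (zbasis b)) (zbasis a) l := by
  have hfd : Differentiable ℝ (fpair P k) := hf2.differentiable two_ne_zero
  have hfun : (fun z => fderiv ℝ (fun w => fpair P k w l) z (zbasis a))
      = fun z => fderiv ℝ (fpair P k) z (zbasis a) l := by
    funext z
    rw [fderiv_pi_comp (fpair P k) (hfd z) l]
    rfl
  show fderiv ℝ (fun z => fderiv ℝ (fun w => fpair P k w l) z (zbasis a)) (zbar P ub k)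
      (zbasis b) = _
  rw [hfun]
  have h2 := hasFDerivAt_fderiv_apply (fpair P k) hf2 (zbar P ub k) (zbasis a)
  have h3 := ((ContinuousLinearMap.proj (R := ℝ) (φ := fun _ : Fin nx => ℝ) l).hasFDerivAt).comp
    (zbar P ub k) h2
  have h4 : HasFDerivAt (fun z => fderiv ℝ (fpair P k) z (zbasis a) l)
      ((ContinuousLinearMap.proj l).comp
        ((fderiv ℝ (fderiv ℝ (fpair P k)) (zbar P ub k)).flip (zbasis a))) (zbar P ub k) := h3
  rw [h4.fderiv]
  simp

lemma quad_f (hf2 : ContDiff ℝ 2 (fpair P k)) (v : Stt nx) (w : Inp N m) (l : Fin nx) :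
    (fderiv ℝ (fderiv ℝ (fpair P k)) (zbar P ub k) (v, w)) (v, w) l
      = Rquad P ub k v w l := by
  rw [clm_z_expand (fderiv ℝ (fderiv ℝ (fpair P k)) (zbar P ub k)) v w,
    ContinuousLinearMap.sum_apply, Finset.sum_apply]
  simp only [ContinuousLinearMap.smul_apply, Pi.smul_apply, smul_eq_mul]
  have e2 : ∀ b : ZIdx nx N m,
      (fderiv ℝ (fderiv ℝ (fpair P k)) (zbar P ub k) (zbasis b)) (v, w) l
        = ∑ a, Sum.elim v w a * (fderiv ℝ (fderiv ℝ (fpair P k)) (zbar P ub k) (zbasis b))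
            (zbasis a) l := by
    intro b
    rw [clm_z_expand (fderiv ℝ (fderiv ℝ (fpair P k)) (zbar P ub k) (zbasis b)) v w,
      Finset.sum_apply]
    simp only [Pi.smul_apply, smul_eq_mul]
  calc ∑ b, Sum.elim v w b *
        (fderiv ℝ (fderiv ℝ (fpair P k)) (zbar P ub k) (zbasis b)) (v, w) l
      = ∑ b, ∑ a, Sum.elim v w b * (Sum.elim v w a *
          (fderiv ℝ (fderiv ℝ (fpair P k)) (zbar P ub k) (zbasis b)) (zbasis a) l) := by
        exact Finset.sum_congr rfl fun b _ => by rw [e2 b, Finset.mul_sum]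
    _ = ∑ a, ∑ b, Sum.elim v w b * (Sum.elim v w a *
          (fderiv ℝ (fderiv ℝ (fpair P k)) (zbar P ub k) (zbasis b)) (zbasis a) l) :=
        Finset.sum_comm
    _ = Rquad P ub k v w l := by
        unfold Rquad
        rw [dotProduct]
        refine Finset.sum_congr rfl fun a _ => ?_
        rw [Matrix.mulVec, dotProduct, Finset.mul_sum]
        refine Finset.sum_congr rfl fun b _ => ?_
        rw [Gmat_eq P ub hf2 l a b]
        ring

end S6Proof2
section S6Proof3

variable {T nx N : ℕ} {m : Fin N → ℕ} (P : Setup T nx N m) (ub : Seq T N m)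
  {n : Fin N} {k : ℕ}

lemma cpair_apply_vec (v : Stt nx) (w : Inp N m) :
    fderiv ℝ (cpair P n k) (zbar P ub k) (v, w)
      = M1x P ub n k ⬝ᵥ v + M1u P ub n k ⬝ᵥ w := by
  rw [clm_z_expand (fderiv ℝ (cpair P n k) (zbar P ub k)) v w, Fintype.sum_sum_type]
  simp only [smul_eq_mul, Sum.elim_inl, Sum.elim_inr, dotProduct]
  congr 1
  · exact Finset.sum_congr rfl fun j _ => by rw [M1x]; ring
  · exact Finset.sum_congr rfl fun p _ => by rw [M1u]; ring

lemma M2_eq (hc2 : ContDiff ℝ 2 (cpair P n k)) (a b : ZIdx nx N m) :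
    M2 P ub n k a b
      = (fderiv ℝ (fderiv ℝ (cpair P n k)) (zbar P ub k) (zbasis b)) (zbasis a) := by
  show fderiv ℝ (fun z => fderiv ℝ (cpair P n k) z (zbasis a)) (zbar P ub k) (zbasis b) = _
  rw [(hasFDerivAt_fderiv_apply (cpair P n k) hc2 (zbar P ub k) (zbasis a)).fderiv]
  simp

lemma quad_c (hc2 : ContDiff ℝ 2 (cpair P n k)) (v : Stt nx) (w : Inp N m) :
    (fderiv ℝ (fderiv ℝ (cpair P n k)) (zbar P ub k) (v, w)) (v, w)
      = Sum.elim v w ⬝ᵥ (M2 P ub n k *ᵥ Sum.elim v w) := by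
  rw [clm_z_expand (fderiv ℝ (fderiv ℝ (cpair P n k)) (zbar P ub k)) v w,
    ContinuousLinearMap.sum_apply]
  simp only [ContinuousLinearMap.smul_apply, smul_eq_mul]
  have e2 : ∀ b : ZIdx nx N m,
      (fderiv ℝ (fderiv ℝ (cpair P n k)) (zbar P ub k) (zbasis b)) (v, w)
        = ∑ a, Sum.elim v w a *
            (fderiv ℝ (fderiv ℝ (cpair P n k)) (zbar P ub k) (zbasis b)) (zbasis a) := by
    intro b
    rw [clm_z_expand (fderiv ℝ (fderiv ℝ (cpair P n k)) (zbar P ub k) (zbasis b)) v w]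
    simp only [smul_eq_mul]
  calc ∑ b, Sum.elim v w b *
        (fderiv ℝ (fderiv ℝ (cpair P n k)) (zbar P ub k) (zbasis b)) (v, w)
      = ∑ b, ∑ a, Sum.elim v w b * (Sum.elim v w a *
          (fderiv ℝ (fderiv ℝ (cpair P n k)) (zbar P ub k) (zbasis b)) (zbasis a)) := by
        exact Finset.sum_congr rfl fun b _ => by rw [e2 b, Finset.mul_sum]
    _ = ∑ a, ∑ b, Sum.elim v w b * (Sum.elim v w a *
          (fderiv ℝ (fderiv ℝ (cpair P n k)) (zbar P ub k) (zbasis b)) (zbasis a)) :=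
        Finset.sum_comm
    _ = _ := by
        rw [dotProduct]
        refine Finset.sum_congr rfl fun a _ => ?_
        rw [Matrix.mulVec, dotProduct, Finset.mul_sum]
        refine Finset.sum_congr rfl fun b _ => ?_
        rw [M2_eq P ub hc2 a b]
        ring

end S6Proof3
section S6Proof4

variable {T nx N : ℕ} {m : Fin N → ℕ} (P : Setup T nx N m)

lemma secondD {F : Type*} [NormedAddCommGroup F] [NormedSpace ℝ F]
    (hf : ∀ k ≤ T, ContDiff ℝ 2 (fpair P k))
    (φ : Stt nx × Inp N m → F) (hφ : ContDiff ℝ 2 φ) {k : ℕ} (hk : k ≤ T)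
    (ub δu : Seq T N m) {D : Seq T N m →L[ℝ] Stt nx}
    (hD : HasFDerivAt (fun u => fderiv ℝ (trajF P k) u δu) D ub) :
    ∃ D2 : Seq T N m →L[ℝ] F,
      HasFDerivAt (fun u => fderiv ℝ (fun u' => φ (ZmapF P k u')) u δu) D2 ub ∧
      D2 δu = fderiv ℝ φ (zbar P ub k) (D δu, 0)
        + (fderiv ℝ (fderiv ℝ φ) (zbar P ub k)
            (fderiv ℝ (trajF P k) ub δu, extSeq δu k))
          (fderiv ℝ (trajF P k) ub δu, extSeq δu k) := by
  have hφd : Differentiable ℝ φ := hφ.differentiable two_ne_zero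
  have hrw : (fun u => fderiv ℝ (fun u' => φ (ZmapF P k u')) u δu)
      = fun u => (fderiv ℝ φ (ZmapF P k u)) (fderiv ℝ (trajF P k) u δu, extSeq δu k) := by
    funext u
    exact fderiv_comp_Z P hf φ hφd k hk u δu
  have hZ := hasFDerivAt_Z P hf k hk ub
  have hH : HasFDerivAt (fderiv ℝ φ) (fderiv ℝ (fderiv ℝ φ) (ZmapF P k ub)) (ZmapF P k ub) :=
    (((hφ.fderiv_right (m := 1) (by norm_num)).differentiable one_ne_zero) _).hasFDerivAt
  have hcmap := hH.comp ub hZ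
  have hcmap' : HasFDerivAt (fun u => fderiv ℝ φ (ZmapF P k u))
      ((fderiv ℝ (fderiv ℝ φ) (ZmapF P k ub)).comp
        ((fderiv ℝ (trajF P k) ub).prod (extCLM k (by omega)))) ub := hcmap
  have hv : HasFDerivAt (fun u => (fderiv ℝ (trajF P k) u δu, extSeq δu k))
      (D.prod 0) ub := hD.prodMk (hasFDerivAt_const _ _)
  have happ := hcmap'.clm_apply hv
  refine ⟨_, by rw [hrw]; exact happ, ?_⟩
  simp only [ContinuousLinearMap.add_apply, ContinuousLinearMap.coe_comp',
    Function.comp_apply, ContinuousLinearMap.prod_apply, ContinuousLinearMap.flip_apply,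
    ContinuousLinearMap.zero_apply, ContinuousLinearMap.comp_apply]
  rw [extCLM_apply]
  rfl

lemma traj_main (hf : ∀ k ≤ T, ContDiff ℝ 2 (fpair P k)) (ub δu : Seq T N m) :
    ∀ k, k ≤ T + 1 →
    fderiv ℝ (trajF P k) ub δu = dxRec P ub δu k ∧
    ∃ D : Seq T N m →L[ℝ] Stt nx,
      HasFDerivAt (fun u => fderiv ℝ (trajF P k) u δu) D ub ∧ D δu = DxRec P ub δu k := by
  intro k
  induction k with
  | zero =>
    intro _
    have h0 : fderiv ℝ (trajF P 0) = fun _ => 0 := by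
      funext u
      exact fderiv_const_apply P.x0
    constructor
    · rw [h0]
      simp [dxRec]
    · have hfun : (fun u : Seq T N m => fderiv ℝ (trajF P 0) u δu)
          = fun _ => (0 : Stt nx) := by
        funext u
        rw [h0]
        rfl
      refine ⟨0, by rw [hfun]; exact hasFDerivAt_const _ _, by simp [DxRec]⟩
  | succ k ih =>
    intro h
    have hk : k ≤ T := by omega
    obtain ⟨h1, D, hD, hDval⟩ := ih (by omega)
    have hf2 := hf k hk
    have hφd : Differentiable ℝ (fpair P k) := hf2.differentiable two_ne_zero
    have hstep : ∀ u, fderiv ℝ (trajF P (k+1)) u δu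
        = fderiv ℝ (fpair P k) (ZmapF P k u) (fderiv ℝ (trajF P k) u δu, extSeq δu k) :=
      fun u => fderiv_comp_Z P hf (fpair P k) hφd k hk u δu
    refine ⟨?_, ?_⟩
    · rw [hstep ub, h1, show ZmapF P k ub = zbar P ub k from rfl]
      funext l
      rw [fpair_apply_vec P ub hf2 _ _ l]
      rfl
    · obtain ⟨D2, hD2, hval⟩ := secondD P hf (fpair P k) hf2 hk ub δu hD
      refine ⟨D2, hD2, ?_⟩
      rw [hval, h1, hDval]
      funext l
      simp only [Pi.add_apply]
      rw [fpair_apply_vec P ub hf2 _ _ l, quad_f P ub hf2 _ _ l]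
      show (Amat P ub k *ᵥ DxRec P ub δu k + Bmat P ub k *ᵥ 0) l + _ = _
      rw [Matrix.mulVec_zero, add_zero]
      rfl

end S6Proof4
section S6Proof5

variable {T nx N : ℕ} {m : Fin N → ℕ} (P : Setup T nx N m)
  (hf : ∀ k ≤ T, ContDiff ℝ 2 (fpair P k))
  (hc : ∀ n : Fin N, ∀ k ≤ T, ContDiff ℝ 2 (cpair P n k))

include hf hc in
lemma J1 (n : Fin N) (ub δu : Seq T N m) :
    fderiv ℝ (J P n) ub δu
      = ∑ k ∈ Finset.range (T + 1),
          (M1x P ub n k ⬝ᵥ dxRec P ub δu k + M1u P ub n k ⬝ᵥ extSeq δu k) := by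
  have hdiff : ∀ k ∈ Finset.range (T + 1),
      DifferentiableAt ℝ (fun u => cpair P n k (ZmapF P k u)) ub := by
    intro k hkr
    have hk : k ≤ T := by simpa [Nat.lt_succ_iff] using Finset.mem_range.mp hkr
    exact (((hc n k hk).comp (contDiff_ZmapF P hf k hk)).differentiable two_ne_zero).differentiableAt
  rw [show J P n = (fun u => ∑ k ∈ Finset.range (T + 1), cpair P n k (ZmapF P k u)) from rfl]
  rw [fderiv_fun_sum hdiff, ContinuousLinearMap.sum_apply]
  refine Finset.sum_congr rfl fun k hkr => ?_
  have hk : k ≤ T := by simpa [Nat.lt_succ_iff] using Finset.mem_range.mp hkr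
  rw [fderiv_comp_Z P hf (cpair P n k) ((hc n k hk).differentiable two_ne_zero) k hk ub δu]
  rw [show ZmapF P k ub = zbar P ub k from rfl]
  rw [(traj_main P hf ub δu k (by omega)).1]
  exact cpair_apply_vec P ub _ _

include hf hc in
lemma J2 (n : Fin N) (ub δu : Seq T N m) :
    fderiv ℝ (fun u => fderiv ℝ (J P n) u δu) ub δu
      = ∑ k ∈ Finset.range (T + 1),
          (Sum.elim (dxRec P ub δu k) (extSeq δu k) ⬝ᵥ
              (M2 P ub n k *ᵥ Sum.elim (dxRec P ub δu k) (extSeq δu k))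
            + M1x P ub n k ⬝ᵥ DxRec P ub δu k) := by
  have hrw : (fun u => fderiv ℝ (J P n) u δu)
      = fun u => ∑ k ∈ Finset.range (T + 1),
          fderiv ℝ (fun u' => cpair P n k (ZmapF P k u')) u δu := by
    funext u
    have hdiff : ∀ k ∈ Finset.range (T + 1),
        DifferentiableAt ℝ (fun u => cpair P n k (ZmapF P k u)) u := by
      intro k hkr
      have hk : k ≤ T := by simpa [Nat.lt_succ_iff] using Finset.mem_range.mp hkr
      exact (((hc n k hk).comp
        (contDiff_ZmapF P hf k hk)).differentiable two_ne_zero).differentiableAt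
    rw [show J P n = (fun u => ∑ k ∈ Finset.range (T + 1), cpair P n k (ZmapF P k u)) from rfl]
    rw [fderiv_fun_sum hdiff, ContinuousLinearMap.sum_apply]
  rw [hrw]
  have hterm : ∀ k, k ≤ T → ∃ D2 : Seq T N m →L[ℝ] ℝ,
      HasFDerivAt (fun u => fderiv ℝ (fun u' => cpair P n k (ZmapF P k u')) u δu) D2 ub ∧
      D2 δu = Sum.elim (dxRec P ub δu k) (extSeq δu k) ⬝ᵥ
              (M2 P ub n k *ᵥ Sum.elim (dxRec P ub δu k) (extSeq δu k))
            + M1x P ub n k ⬝ᵥ DxRec P ub δu k := by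
    intro k hk
    obtain ⟨D, hD, hDval⟩ := (traj_main P hf ub δu k (by omega)).2
    obtain ⟨D2, hD2, hval⟩ := secondD P hf (cpair P n k) (hc n k hk) hk ub δu hD
    refine ⟨D2, hD2, ?_⟩
    rw [hval, hDval, (traj_main P hf ub δu k (by omega)).1]
    rw [cpair_apply_vec P ub, quad_c P ub (hc n k hk)]
    rw [dotProduct_zero, add_zero, add_comm]
  have hdiff2 : ∀ k ∈ Finset.range (T + 1),
      DifferentiableAt ℝ
        (fun u => fderiv ℝ (fun u' => cpair P n k (ZmapF P k u')) u δu) ub := by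
    intro k hkr
    have hk : k ≤ T := by simpa [Nat.lt_succ_iff] using Finset.mem_range.mp hkr
    obtain ⟨D2, hD2, _⟩ := hterm k hk
    exact hD2.differentiableAt
  rw [fderiv_fun_sum hdiff2, ContinuousLinearMap.sum_apply]
  refine Finset.sum_congr rfl fun k hkr => ?_
  have hk : k ≤ T := by simpa [Nat.lt_succ_iff] using Finset.mem_range.mp hkr
  obtain ⟨D2, hD2, hval⟩ := hterm k hk
  rw [hD2.fderiv]
  exact hval

end S6Proof5
section S6Proof6

variable {T nx N : ℕ} {m : Fin N → ℕ} (P : Setup T nx N m)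

lemma vec1_quad (ub : Seq T N m) (n : Fin N) (k : ℕ) (δx : Stt nx) (δv : Inp N m) :
    vec1 δx δv ⬝ᵥ (Mmat P ub n k *ᵥ vec1 δx δv)
      = 2 * P.c n k (traj P ub k) (extSeq ub k)
        + 2 * (M1x P ub n k ⬝ᵥ δx + M1u P ub n k ⬝ᵥ δv)
        + Sum.elim δx δv ⬝ᵥ (M2 P ub n k *ᵥ Sum.elim δx δv) := by
  simp only [dotProduct, Matrix.mulVec, Fintype.sum_sum_type, Fintype.sum_unique,
    vec1, Mmat, Sum.elim_inl, Sum.elim_inr, one_mul, mul_one]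
  simp only [mul_add, add_mul, Finset.sum_add_distrib, Finset.mul_sum]
  have c1 : ∀ (w : Fin nx) , δx w * M1x P ub n k w = M1x P ub n k w * δx w :=
    fun w => mul_comm _ _
  have c2 : ∀ (w : UIdx N m), δv w * M1u P ub n k w = M1u P ub n k w * δv w :=
    fun w => mul_comm _ _
  simp only [c1, c2]
  ring_nf
  have d1 : (∑ x, 2 * M1x P ub n k x * δx x) = (∑ x, M1x P ub n k x * δx x) * 2 := by
    rw [Finset.sum_mul]
    exact Finset.sum_congr rfl fun x _ => by ring
  have d2 : (∑ x, 2 * M1u P ub n k x * δv x) = (∑ x, M1u P ub n k x * δv x) * 2 := by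
    rw [Finset.sum_mul]
    exact Finset.sum_congr rfl fun x _ => by ring
  simp only [Finset.sum_mul]
  ring
end S6Proof6
/-- the second-order Taylor model of J_n at ū along δu coincides with the
stage-wise quadratic objective ½ Σ_k ( [1;δx_k;δu_k]ᵀ M_{n,k} [1;δx_k;δu_k] + M_{n,k}^{1x} Δx_k ),
where δx_k and Δx_k are given by the recursions of the Newton dynamic game. -/
theorem statement6 (T nx N : ℕ) (m : Fin N → ℕ) (hnx : 1 ≤ nx) (P : Setup T nx N m)
    (hf : ∀ k ≤ T, ContDiff ℝ 2 (fpair P k))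
    (hc : ∀ n : Fin N, ∀ k ≤ T, ContDiff ℝ 2 (cpair P n k)) :
    ∀ (n : Fin N) (ub δu : Seq T N m),
      J P n ub + fderiv ℝ (J P n) ub δu
          + (1 / 2) * fderiv ℝ (fun u => fderiv ℝ (J P n) u δu) ub δu
        = (1 / 2) * ∑ k ∈ Finset.range (T + 1),
            (vec1 (dxRec P ub δu k) (extSeq δu k) ⬝ᵥ
                (Mmat P ub n k *ᵥ vec1 (dxRec P ub δu k) (extSeq δu k))
              + M1x P ub n k ⬝ᵥ DxRec P ub δu k) := by
  intro n ub δu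
  rw [J1 P hf hc n ub δu, J2 P hf hc n ub δu]
  rw [show J P n ub = ∑ k ∈ Finset.range (T+1), P.c n k (traj P ub k) (extSeq ub k) from rfl]
  rw [Finset.sum_congr rfl fun k _ =>
    congrArg (· + M1x P ub n k ⬝ᵥ DxRec P ub δu k)
      (vec1_quad P ub n k (dxRec P ub δu k) (extSeq δu k))]
  simp only [Finset.sum_add_distrib, ← Finset.mul_sum]
  ring

end DynGame
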